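/- Every concept of probabilistic fuzzy ALC of rank at most n is non-expansive with respect to the depth-n Kantorovich distance: for states a, b in a model, |C(a) − C(b)| ≤ d^K_n(a,b) whenever rk(C) ≤ n. Consequently d^L_n ≤ d^K_n. -/
import Mathlib


/-- A probabilistic model: states, finitely many fuzzy atomic concepts, and at
each state either a successor probability mass function or the zero function. -/
structure PModel (S : Type*) where
  natoms : ℕ
  atom : Fin natoms → S → ℝ
  atom_mem : ∀ i s, atom i s ∈ Set.Icc (0:ℝ) 1
  r : S → S → ℝ
  r_nonneg : ∀ a b, 0 ≤ r a b
  r_sum : ∀ a, (∑' b, r a b = 1) ∨ (∀ b, r a b = 0)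

/-- A function is the zero (sub)distribution. -/
def IsZeroFun {S : Type*} (π : S → ℝ) : Prop := ∀ x, π x = 0

/- Kantorovich lifting of a pseudometric `d` to (sub)distributions, with the
convention that the zero function has distance 1 from every probability mass
function and distance 0 from itself. -/
open Classical in
noncomputable def klift {S : Type*} (d : S → S → ℝ) (π₁ π₂ : S → ℝ) : ℝ :=
  if IsZeroFun π₁ ∧ IsZeroFun π₂ then 0
  else if IsZeroFun π₁ ∨ IsZeroFun π₂ then 1
  else sSup {t : ℝ | ∃ f : S → ℝ, (∀ x, f x ∈ Set.Icc (0:ℝ) 1) ∧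
    (∀ x y, |f x - f y| ≤ d x y) ∧ t = |(∑' x, π₁ x * f x) - ∑' x, π₂ x * f x|}

/-- The depth-`n` Kantorovich behavioural distance. -/
noncomputable def dK {S : Type*} (M : PModel S) : ℕ → S → S → ℝ
  | 0 => fun _ _ => 0
  | n + 1 => fun a b =>
      max (⨆ i : Fin M.natoms, |M.atom i a - M.atom i b|)
        (klift (dK M n) (M.r a) (M.r b))

/-- ALCConcepts of probabilistic fuzzy ALC with `k` atomic concepts. -/
inductive ALCConcept (k : ℕ) where
  | const : Set.Icc (0:ℚ) 1 → ALCConcept k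
  | atom : Fin k → ALCConcept k
  | tsub : ALCConcept k → Set.Icc (0:ℚ) 1 → ALCConcept k
  | neg : ALCConcept k → ALCConcept k
  | conj : ALCConcept k → ALCConcept k → ALCConcept k
  | dia : ALCConcept k → ALCConcept k

/-- The rank of a concept: maximal nesting depth of ◇ and atomic concepts. -/
def ALCConcept.rank {k : ℕ} : ALCConcept k → ℕ
  | const _ => 0
  | atom _ => 1
  | tsub C _ => C.rank
  | neg C => C.rank
  | conj C D => max C.rank D.rank
  | dia C => C.rank + 1

/-- Semantics of concepts: a [0,1]-valued function on states; ◇ is expected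
truth value under the successor distribution (0 at blocking states). -/
noncomputable def sem {S : Type*} (M : PModel S) : ALCConcept M.natoms → S → ℝ
  | .const q => fun _ => ((q : ℚ) : ℝ)
  | .atom i => M.atom i
  | .tsub C q => fun a => max (sem M C a - ((q : ℚ) : ℝ)) 0
  | .neg C => fun a => 1 - sem M C a
  | .conj C D => fun a => min (sem M C a) (sem M D a)
  | .dia C => fun a => ∑' a', M.r a a' * sem M C a'

/-- The depth-`n` logical distance. -/
noncomputable def dL {S : Type*} (M : PModel S) (n : ℕ) (a b : S) : ℝ :=
  sSup {t : ℝ | ∃ C : ALCConcept M.natoms, C.rank ≤ n ∧ t = |sem M C a - sem M C b|}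


section Aux
variable {S : Type*}

lemma r_summable (M : PModel S) (a : S) : Summable (M.r a) := by
  rcases M.r_sum a with h | h
  · by_contra hc
    rw [tsum_eq_zero_of_not_summable hc] at h
    norm_num at h
  · exact summable_zero.congr fun b => (h b).symm

lemma r_tsum_le_one (M : PModel S) (a : S) : ∑' b, M.r a b ≤ 1 := by
  rcases M.r_sum a with h | h
  · exact h.le
  · rw [tsum_congr h, tsum_zero]; norm_num

lemma mul_summable (M : PModel S) (a : S) (f : S → ℝ)
    (hf : ∀ x, f x ∈ Set.Icc (0:ℝ) 1) : Summable (fun x => M.r a x * f x) :=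
  Summable.of_nonneg_of_le (fun x => mul_nonneg (M.r_nonneg a x) (hf x).1)
    (fun x => mul_le_of_le_one_right (M.r_nonneg a x) (hf x).2) (r_summable M a)

lemma exp_mem (M : PModel S) (a : S) (f : S → ℝ)
    (hf : ∀ x, f x ∈ Set.Icc (0:ℝ) 1) :
    (∑' x, M.r a x * f x) ∈ Set.Icc (0:ℝ) 1 := by
  constructor
  · exact tsum_nonneg fun x => mul_nonneg (M.r_nonneg a x) (hf x).1
  · calc (∑' x, M.r a x * f x) ≤ ∑' x, M.r a x :=
        Summable.tsum_le_tsum (fun x => mul_le_of_le_one_right (M.r_nonneg a x) (hf x).2)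
          (mul_summable M a f hf) (r_summable M a)
      _ ≤ 1 := r_tsum_le_one M a

lemma abs_sub_le_one_of_Icc {x y : ℝ} (hx : x ∈ Set.Icc (0:ℝ) 1)
    (hy : y ∈ Set.Icc (0:ℝ) 1) : |x - y| ≤ 1 := by
  rw [abs_sub_le_iff]
  constructor <;> [linarith [hx.2, hy.1]; linarith [hy.2, hx.1]]

lemma zero_exp (M : PModel S) (a : S) (f : S → ℝ) (h : IsZeroFun (M.r a)) :
    (∑' x, M.r a x * f x) = 0 := by
  rw [tsum_congr fun x => by rw [h x, zero_mul], tsum_zero]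

lemma expdiff_le_klift (M : PModel S) (d : S → S → ℝ) (f : S → ℝ)
    (hf : ∀ x, f x ∈ Set.Icc (0:ℝ) 1) (hne : ∀ x y, |f x - f y| ≤ d x y) (a b : S) :
    |(∑' x, M.r a x * f x) - ∑' x, M.r b x * f x| ≤ klift d (M.r a) (M.r b) := by
  unfold klift
  by_cases ha : IsZeroFun (M.r a) <;> by_cases hb : IsZeroFun (M.r b)
  · rw [if_pos ⟨ha, hb⟩, zero_exp M a f ha, zero_exp M b f hb]
    simp
  · rw [if_neg (by tauto), if_pos (Or.inl ha)]
    exact abs_sub_le_one_of_Icc (exp_mem M a f hf) (exp_mem M b f hf)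
  · rw [if_neg (by tauto), if_pos (Or.inr hb)]
    exact abs_sub_le_one_of_Icc (exp_mem M a f hf) (exp_mem M b f hf)
  · rw [if_neg (by tauto), if_neg (by tauto)]
    apply le_csSup
    · refine ⟨1, ?_⟩
      rintro t ⟨g, hg, -, rfl⟩
      exact abs_sub_le_one_of_Icc (exp_mem M a g hg) (exp_mem M b g hg)
    · exact ⟨f, hf, hne, rfl⟩

lemma sem_mem (M : PModel S) (C : ALCConcept M.natoms) (a : S) :
    sem M C a ∈ Set.Icc (0:ℝ) 1 := by
  induction C generalizing a with
  | const q =>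
    simp only [sem, Set.mem_Icc]
    exact ⟨by exact_mod_cast q.2.1, by exact_mod_cast q.2.2⟩
  | atom i => exact M.atom_mem i a
  | tsub C q ih =>
    have h := ih a
    have hq : (0:ℝ) ≤ ((q : ℚ) : ℝ) := by exact_mod_cast q.2.1
    simp only [sem, Set.mem_Icc]
    constructor
    · exact le_max_right _ _
    · apply max_le <;> [linarith [h.2]; norm_num]
  | neg C ih =>
    have h := ih a
    simp only [sem, Set.mem_Icc]
    constructor <;> [linarith [h.2]; linarith [h.1]]
  | conj C D ihC ihD =>
    exact ⟨le_min (ihC a).1 (ihD a).1, (min_le_left _ _).trans (ihC a).2⟩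
  | dia C ih => exact exp_mem M a (sem M C) ih

lemma dK_nonneg (M : PModel S) : ∀ n a b, 0 ≤ dK M n a b := by
  intro n
  induction n with
  | zero => intro a b; simp [dK]
  | succ n ih =>
    intro a b
    simp only [dK]
    exact le_trans (Real.iSup_nonneg fun i => abs_nonneg _) (le_max_left _ _)

end Aux

/-- Concepts of rank at most n are non-expansive wrt the depth-n Kantorovich
distance; consequently the logical distance is below the Kantorovich distance. -/
theorem concepts_nonexpansive_dK {S : Type*} [Countable S] (M : PModel S) (n : ℕ) :
    (∀ C : ALCConcept M.natoms, C.rank ≤ n →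
      ∀ a b : S, |sem M C a - sem M C b| ≤ dK M n a b) ∧
    (∀ a b : S, dL M n a b ≤ dK M n a b) := by
  have main : ∀ C : ALCConcept M.natoms, ∀ n, C.rank ≤ n →
      ∀ a b, |sem M C a - sem M C b| ≤ dK M n a b := by
    intro C
    induction C with
    | const q =>
      intro n _ a b
      simpa [sem] using dK_nonneg M n a b
    | atom i =>
      intro n hn a b
      have h1 : 1 ≤ n := hn
      obtain ⟨m, rfl⟩ : ∃ m, n = m + 1 := ⟨n - 1, by omega⟩
      simp only [dK, sem]
      have hb : |M.atom i a - M.atom i b| ≤ ⨆ j : Fin M.natoms, |M.atom j a - M.atom j b| :=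
        le_ciSup (f := fun j : Fin M.natoms => |M.atom j a - M.atom j b|) (Set.Finite.bddAbove (Set.finite_range _)) i
      exact hb.trans (le_max_left _ _)
    | tsub C q ih =>
      intro n hn a b
      refine le_trans ?_ (ih n hn a b)
      calc |sem M (.tsub C q) a - sem M (.tsub C q) b|
          = |max (sem M C a - ((q:ℚ):ℝ)) 0 - max (sem M C b - ((q:ℚ):ℝ)) 0| := by
            simp [sem]
        _ ≤ max |(sem M C a - ((q:ℚ):ℝ)) - (sem M C b - ((q:ℚ):ℝ))| |(0:ℝ) - 0| :=
            abs_max_sub_max_le_max _ _ _ _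
        _ ≤ |sem M C a - sem M C b| := by
            apply max_le
            · apply le_of_eq; congr 1; ring
            · simp [abs_nonneg]
    | neg C ih =>
      intro n hn a b
      refine le_trans (le_of_eq ?_) (ih n hn a b)
      have : sem M (.neg C) a - sem M (.neg C) b = -(sem M C a - sem M C b) := by
        simp only [sem]; ring
      rw [this, abs_neg]
    | conj C D ihC ihD =>
      intro n hn a b
      have hC : C.rank ≤ n := le_trans (le_max_left _ _) hn
      have hD : D.rank ≤ n := le_trans (le_max_right _ _) hn
      simp only [sem]
      calc |sem M (.conj C D) a - sem M (.conj C D) b|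
          ≤ max |sem M C a - sem M C b| |sem M D a - sem M D b| :=
            abs_min_sub_min_le_max _ _ _ _
        _ ≤ dK M n a b := max_le (ihC n hC a b) (ihD n hD a b)
    | dia C ih =>
      intro n hn a b
      have h1 : C.rank + 1 ≤ n := hn
      obtain ⟨m, rfl⟩ : ∃ m, n = m + 1 := ⟨n - 1, by omega⟩
      have hm : C.rank ≤ m := by omega
      simp only [dK, sem]
      refine le_trans ?_ (le_max_right (⨆ i : Fin M.natoms, |M.atom i a - M.atom i b|) _)
      exact expdiff_le_klift M (dK M m) (sem M C) (sem_mem M C) (fun x y => ih m hm x y) a b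
  refine ⟨fun C h a b => main C n h a b, fun a b => ?_⟩
  apply Real.sSup_le
  · rintro t ⟨C, hC, rfl⟩
    exact main C n hC a b
  · exact dK_nonneg M n a b
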